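/- If Eggert's Conjecture holds (for every finite-dimensional nilpotent commutative algebra R over a perfect field of characteristic p, dim R ≥ p dim R^(p), for all primes p), then for every finite nilpotent commutative semigroup S with zero and every positive integer n, card(S \ {0}) ≥ n · card(S^(n) \ {0}). -/

import Mathlib

open Pointwise

/-- `pw x n` is the `n`-th power of `x` in any magma, for `n ≥ 1`
(with the junk value `pw x 0 = x`). -/
def pw {R : Type*} [Mul R] (x : R) : ℕ → R
  | 0 => x
  | 1 => x
  | n + 2 => x * pw x (n + 1)
/-- Product of submodules of a (possibly nonunital) algebra: the span of the
set of products. -/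
noncomputable instance submul {F R : Type*} [Semiring F] [NonUnitalNonAssocSemiring R]
    [Module F R] : Mul (Submodule F R) :=
  ⟨fun V W => Submodule.span F (Set.image2 (· * ·) (V : Set R) (W : Set R))⟩

/-!
Over `F = ZMod p`, which is perfect, the contracted semigroup algebra `F₀ S` is a nilpotent
commutative algebra of dimension `|S \ {0}|`, and its span of `p`-th powers contains the
linearly independent basis vectors `s ^ p ≠ 0`; so Eggert's inequality for `F₀ S` gives
`p |S^(p) \ {0}| ≤ |S \ {0}|`. For a product `n = a b` the bound is multiplicative: `S^(ab)` is
the set of `b`-th powers of the subsemigroup `S^(a)`, so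
`a b |S^(ab) \ {0}| ≤ a |S^(a) \ {0}| ≤ |S \ {0}|`.
-/

section Powers

variable {M N : Type*}

lemma pw_succ [Mul M] (x : M) {n : ℕ} (hn : 1 ≤ n) : pw x (n + 1) = x * pw x n := by
  obtain ⟨k, rfl⟩ := Nat.exists_eq_add_of_le' hn
  rfl

lemma map_pw [Mul M] [Mul N] (f : M →ₙ* N) (x : M) : ∀ n, f (pw x n) = pw (f x) n
  | 0 | 1 => rfl
  | n + 2 => by rw [pw, map_mul, map_pw f x (n + 1)]; rfl

lemma pw_mem_pw [Mul M] {U : Set M} {x : M} (hx : x ∈ U) : ∀ n, pw x n ∈ pw U n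
  | 0 | 1 => hx
  | n + 2 => Set.mul_mem_mul hx (pw_mem_pw hx (n + 1))

lemma pw_mono [Mul M] {U V : Set M} (h : U ⊆ V) : ∀ n, pw U n ⊆ pw V n
  | 0 | 1 => h
  | n + 2 => Set.mul_subset_mul h (pw_mono h (n + 1))

lemma image_pw [Mul M] [Mul N] (f : M →ₙ* N) (U : Set M) : ∀ n, f '' pw U n = pw (f '' U) n
  | 0 | 1 => rfl
  | n + 2 => by rw [pw, Set.image_mul, image_pw f U (n + 1)]; rfl

lemma zero_pw [MulZeroClass M] : ∀ n, pw (0 : M) n = 0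
  | 0 | 1 => rfl
  | _ + 2 => zero_mul _

lemma WithOne.coe_pw [Semigroup M] (x : M) {n : ℕ} (hn : 1 ≤ n) :
    ((pw x n : M) : WithOne M) = (x : WithOne M) ^ n := by
  induction n, hn using Nat.le_induction with
  | base => rw [pow_one]; rfl
  | succ n hn ih => rw [pw_succ x hn, WithOne.coe_mul, ih, pow_succ']

lemma pw_pw [Semigroup M] (x : M) {m n : ℕ} (hm : 1 ≤ m) (hn : 1 ≤ n) :
    pw (pw x m) n = pw x (m * n) := by
  apply WithOne.coe_injective
  rw [WithOne.coe_pw _ hn, WithOne.coe_pw _ hm, WithOne.coe_pw _ (Nat.mul_le_mul hm hn), pow_mul]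

open scoped IsMulCommutative in
lemma mul_pw [Semigroup M] [IsMulCommutative M] (x y : M) (n : ℕ) :
    pw (x * y) n = pw x n * pw y n := by
  rcases Nat.eq_zero_or_pos n with rfl | hn
  · rfl
  apply WithOne.coe_injective
  rw [WithOne.coe_mul, WithOne.coe_pw _ hn, WithOne.coe_pw _ hn, WithOne.coe_pw _ hn,
    WithOne.coe_mul, mul_pow]

def pwHom [Semigroup M] [IsMulCommutative M] (n : ℕ) : M →ₙ* M where
  toFun x := pw x n
  map_mul' x y := mul_pw x y n

lemma pw_univ_eq_zero_of_injective [MulZeroClass M] [MulZeroClass N] (f : M →ₙ* N)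
    (hf : Function.Injective f) (hf0 : f 0 = 0) {m : ℕ} (h : pw (Set.univ : Set N) m = {0}) :
    pw (Set.univ : Set M) m = {0} := by
  refine Set.eq_singleton_iff_unique_mem.mpr ⟨?_, fun x hx => hf ?_⟩
  · simpa only [zero_pw] using pw_mem_pw (Set.mem_univ (0 : M)) m
  · have hfx : f x ∈ pw (Set.univ : Set N) m :=
      pw_mono (Set.subset_univ _) m (image_pw f _ m ▸ Set.mem_image_of_mem f hx)
    rw [h] at hfx
    rw [hfx, hf0]

lemma ncard_image_sdiff_zero [Zero M] [Zero N] {f : M → N} (hf : Function.Injective f)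
    (hf0 : f 0 = 0) (s : Set M) : (f '' s \ {0}).ncard = (s \ {0}).ncard := by
  rw [← hf0, ← Set.image_singleton, ← Set.image_sdiff hf, Set.ncard_image_of_injective _ hf]

end Powers

section PowerSubsemigroup

variable {S : Type*} [SemigroupWithZero S] [IsMulCommutative S] (n : ℕ)

instance : Zero (pwHom n : S →ₙ* S).srange := ⟨⟨0, 0, zero_pw n⟩⟩

instance : SemigroupWithZero (pwHom n : S →ₙ* S).srange :=
  Subtype.val_injective.semigroupWithZero _ rfl fun _ _ => rfl

open scoped IsMulCommutative in
instance : IsMulCommutative (pwHom n : S →ₙ* S).srange :=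
  ⟨⟨fun a b => Subtype.ext (mul_comm (a : S) b)⟩⟩

lemma image_coe_range_pw_srange {a b : ℕ} (ha : 1 ≤ a) (hb : 1 ≤ b) :
    ((↑) : (pwHom a : S →ₙ* S).srange → S) '' (Set.range fun x => pw x b) =
      Set.range fun s : S => pw s (a * b) := by
  have hval (x : (pwHom a : S →ₙ* S).srange) : ((pw x b : _) : S) = pw (x : S) b :=
    map_pw (MulMemClass.subtype _) x b
  ext y
  constructor
  · rintro ⟨_, ⟨x, rfl⟩, rfl⟩
    obtain ⟨s, hs⟩ := x.2
    exact ⟨s, by rw [hval, ← hs]; exact (pw_pw s ha hb).symm⟩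
  · rintro ⟨s, rfl⟩
    exact ⟨pw ⟨pwHom a s, s, rfl⟩ b, ⟨_, rfl⟩, by rw [hval]; exact pw_pw s ha hb⟩

end PowerSubsemigroup

/-- `F₀ S` is realised inside `F[S]` as the elements with no `0`-coefficient; `contract` drops
that coefficient, and the product of `F₀ S` is the product of `F[S]` followed by `contract`. -/
abbrev ContractedAlgebra (F S : Type*) [Field F] [SemigroupWithZero S] : Type _ :=
  MonoidAlgebra.supported F F ({0}ᶜ : Set S)

namespace ContractedAlgebra

variable {F : Type*} [Field F] {S : Type*} [SemigroupWithZero S]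

noncomputable def contract : MonoidAlgebra F S →ₗ[F] ContractedAlgebra F S where
  toFun x := ⟨x.erase 0, by simp [MonoidAlgebra.mem_supported]⟩
  map_add' x y := by ext1; ext t; simp [Finsupp.erase_add]
  map_smul' c x := by ext1; ext t; rcases eq_or_ne t 0 with rfl | ht <;> simp [*]

lemma coe_contract (x : MonoidAlgebra F S) : (contract x : MonoidAlgebra F S) = x.erase 0 := rfl

lemma contract_coe (a : ContractedAlgebra F S) : contract (a : MonoidAlgebra F S) = a :=
  Subtype.ext <| MonoidAlgebra.coeff_injective <|
    Finsupp.erase_of_notMem_support fun h => a.2 h rfl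

lemma contract_surjective : Function.Surjective (contract : MonoidAlgebra F S →ₗ[F] _) :=
  fun a => ⟨a, contract_coe a⟩

lemma contract_single_zero_mul (r : F) (y : MonoidAlgebra F S) :
    contract (MonoidAlgebra.single 0 r * y) = 0 := by
  ext1; ext t
  rcases eq_or_ne t 0 with rfl | ht
  · simp [coe_contract]
  · simp only [coe_contract, MonoidAlgebra.coeff_erase, Finsupp.erase_ne ht]
    exact MonoidAlgebra.coeff_single_mul_of_forall_mul_ne r y fun d hd =>
      ht (by simpa using hd.symm)

lemma contract_mul_single_zero (x : MonoidAlgebra F S) (r : F) :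
    contract (x * MonoidAlgebra.single 0 r) = 0 := by
  ext1; ext t
  rcases eq_or_ne t 0 with rfl | ht
  · simp [coe_contract]
  · simp only [coe_contract, MonoidAlgebra.coeff_erase, Finsupp.erase_ne ht]
    exact MonoidAlgebra.coeff_mul_single_of_forall_mul_ne r x fun d hd =>
      ht (by simpa using hd.symm)

noncomputable instance : Mul (ContractedAlgebra F S) :=
  ⟨fun a b => contract ((a : MonoidAlgebra F S) * b)⟩

-- `x` and `contract x` differ by a multiple of `single 0 1`, whose products `contract` kills.
lemma contract_mul (x y : MonoidAlgebra F S) : contract (x * y) = contract x * contract y := by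
  conv_lhs => rw [← MonoidAlgebra.erase_add_single 0 x, ← MonoidAlgebra.erase_add_single 0 y]
  simp only [add_mul, mul_add, map_add, contract_single_zero_mul, contract_mul_single_zero,
    add_zero]
  rfl

noncomputable instance : NonUnitalRing (ContractedAlgebra F S) :=
  contract_surjective.nonUnitalRing _ (map_zero _) (map_add _) contract_mul (map_neg _)
    (map_sub _) (fun n x => map_nsmul _ n x) (fun n x => map_zsmul _ n x)

open scoped IsMulCommutative in
noncomputable instance [IsMulCommutative S] : NonUnitalCommRing (ContractedAlgebra F S) where
  mul_comm a b := congrArg contract (mul_comm (a : MonoidAlgebra F S) b)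

instance : IsScalarTower F (ContractedAlgebra F S) (ContractedAlgebra F S) :=
  ⟨fun c a b => by
    change contract ((c • a : MonoidAlgebra F S) * (b : MonoidAlgebra F S)) =
      c • contract ((a : MonoidAlgebra F S) * (b : MonoidAlgebra F S))
    rw [smul_mul_assoc, map_smul]⟩

instance : SMulCommClass F (ContractedAlgebra F S) (ContractedAlgebra F S) :=
  ⟨fun c a b => by
    change c • contract ((a : MonoidAlgebra F S) * (b : MonoidAlgebra F S)) =
      contract ((a : MonoidAlgebra F S) * (c • b : MonoidAlgebra F S))
    rw [mul_smul_comm, map_smul]⟩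

variable (F S) in
noncomputable def of : S →ₙ* ContractedAlgebra F S where
  toFun s := contract (MonoidAlgebra.single s (1 : F))
  map_mul' s t := by rw [← contract_mul, MonoidAlgebra.single_mul_single, one_mul]

lemma coe_of {s : S} (hs : s ≠ 0) :
    (of F S s : MonoidAlgebra F S) = MonoidAlgebra.single s 1 :=
  MonoidAlgebra.coeff_injective (Finsupp.erase_single_ne hs.symm)

lemma linearIndependent_of : LinearIndependent F fun s : ({0}ᶜ : Set S) => of F S s := by
  apply LinearIndependent.of_comp (Submodule.subtype _)
  convert (MonoidAlgebra.basis S F).linearIndependent.comp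
    ((↑) : ({0}ᶜ : Set S) → S) Subtype.val_injective using 1
  ext1 s
  exact coe_of s.2

lemma finrank_eq [Finite S] :
    Module.finrank F (ContractedAlgebra F S) = ((Set.univ : Set S) \ {0}).ncard := by
  classical
  have := Fintype.ofFinite S
  rw [(MonoidAlgebra.supportedEquivFinsupp _).finrank_eq, Module.finrank_finsupp_self,
    ← Nat.card_eq_fintype_card, Nat.card_coe_set_eq, Set.compl_eq_univ_sdiff]

lemma coe_mul_mem_supported {U V : Set S} {a b : ContractedAlgebra F S}
    (ha : (a : MonoidAlgebra F S) ∈ MonoidAlgebra.supported F F U)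
    (hb : (b : MonoidAlgebra F S) ∈ MonoidAlgebra.supported F F V) :
    ((a * b : ContractedAlgebra F S) : MonoidAlgebra F S) ∈
      MonoidAlgebra.supported F F (U * V) := by
  classical
  rw [MonoidAlgebra.mem_supported] at ha hb ⊢
  calc (((a * b : ContractedAlgebra F S) : MonoidAlgebra F S).coeff.support : Set S)
      = (((a * b : MonoidAlgebra F S).coeff.support.erase 0 : Finset S) : Set S) :=
        by rw [← Finsupp.support_erase]; rfl
    _ ⊆ (a : MonoidAlgebra F S).coeff.support * (b : MonoidAlgebra F S).coeff.support := by
        rw [Finset.coe_erase, ← Finset.coe_mul]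
        exact Set.sdiff_subset.trans
          (Finset.coe_subset.mpr (MonoidAlgebra.support_coeff_mul_subset _ _))
    _ ⊆ U * V := Set.mul_subset_mul ha hb

lemma pw_top_le_comap_supported :
    ∀ k, pw (⊤ : Submodule F (ContractedAlgebra F S)) k ≤
      (MonoidAlgebra.supported F F (pw (Set.univ : Set S) k)).comap (Submodule.subtype _)
  | 0 | 1 => fun _ _ => Set.subset_univ _
  | k + 2 => by
    refine Submodule.span_le.mpr ?_
    rintro _ ⟨a, -, b, hb, rfl⟩
    exact coe_mul_mem_supported (Set.subset_univ _) (pw_top_le_comap_supported (k + 1) hb)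

lemma pw_top_eq_bot {m : ℕ} (h : pw (Set.univ : Set S) m = {0}) :
    pw (⊤ : Submodule F (ContractedAlgebra F S)) m = ⊥ := by
  refine eq_bot_iff.mpr fun a ha => ?_
  have h₀ := (MonoidAlgebra.mem_supported' ..).mp
    (by simpa [h] using pw_top_le_comap_supported m ha)
  have h₁ := (MonoidAlgebra.mem_supported' ..).mp a.2
  rw [Submodule.mem_bot]
  ext t
  by_cases ht : t = 0
  · simpa using h₁ t (by simpa using ht)
  · simpa using h₀ t ht

lemma ncard_pw_le_finrank_span [Finite S] (n : ℕ) :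
    ((Set.range fun s : S => pw s n) \ {0}).ncard ≤
      Module.finrank F (Submodule.span F (Set.range fun x : ContractedAlgebra F S => pw x n)) := by
  set T := (Set.range fun s : S => pw s n) \ {0}
  have := Fintype.ofFinite T
  have hT : T ⊆ {0}ᶜ := fun t ht => ht.2
  have hli := (linearIndependent_of (F := F)).comp (Set.inclusion hT) (Set.inclusion_injective hT)
  have hspan : Submodule.span F (Set.range fun t : T => of F S t) ≤
      Submodule.span F (Set.range fun x => pw x n) := by
    refine Submodule.span_mono ?_
    rintro _ ⟨⟨_, ⟨s, rfl⟩, -⟩, rfl⟩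
    exact ⟨of F S s, (map_pw _ s n).symm⟩
  calc T.ncard = Fintype.card T := by rw [← Nat.card_coe_set_eq, Nat.card_eq_fintype_card]
    _ ≤ _ := linearIndependent_iff_card_le_finrank_span.mp hli
    _ ≤ _ := Submodule.finrank_mono hspan

end ContractedAlgebra

def EggertConjecture : Prop :=
  ∀ (p : ℕ), p.Prime → ∀ (F : Type) [Field F] [CharP F p],
    (∀ a : F, ∃ b : F, b ^ p = a) →
    ∀ (R : Type) [NonUnitalCommRing R] [Module F R] [SMulCommClass F R R]
      [IsScalarTower F R R] [FiniteDimensional F R],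
      (∃ m, 1 ≤ m ∧ pw (⊤ : Submodule F R) m = ⊥) →
      p * Module.finrank F (Submodule.span F (Set.range fun x : R => pw x p))
        ≤ Module.finrank F R

def PowerBound (n : ℕ) : Prop :=
  ∀ (S : Type) [SemigroupWithZero S] [IsMulCommutative S] [Finite S],
    (∃ m, 1 ≤ m ∧ pw (Set.univ : Set S) m = {0}) →
      n * ((Set.range fun s : S => pw s n) \ {0}).ncard ≤ ((Set.univ : Set S) \ {0}).ncard

lemma powerBound_zero : PowerBound 0 := fun _ _ _ _ _ => by rw [zero_mul]; exact Nat.zero_le _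

lemma powerBound_one : PowerBound 1 := fun _ _ _ _ _ => by
  rw [one_mul]
  exact Set.ncard_le_ncard (Set.sdiff_subset_sdiff_left (Set.subset_univ _))

lemma powerBound_prime (h : EggertConjecture) {p : ℕ} (hp : p.Prime) : PowerBound p := by
  intro S _ _ _ ⟨m, hm, hnil⟩
  have := Fact.mk hp
  calc p * ((Set.range fun s : S => pw s p) \ {0}).ncard
      ≤ p * Module.finrank (ZMod p)
          (Submodule.span (ZMod p) (Set.range fun x : ContractedAlgebra (ZMod p) S => pw x p)) :=
        Nat.mul_le_mul_left p (ContractedAlgebra.ncard_pw_le_finrank_span p)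
    _ ≤ Module.finrank (ZMod p) (ContractedAlgebra (ZMod p) S) :=
        h p hp (ZMod p) (fun a => ⟨a, ZMod.pow_card a⟩) _
          ⟨m, hm, ContractedAlgebra.pw_top_eq_bot hnil⟩
    _ = _ := ContractedAlgebra.finrank_eq

lemma PowerBound.mul {a b : ℕ} (ha : PowerBound a) (hb : PowerBound b) : PowerBound (a * b) := by
  rcases Nat.eq_zero_or_pos a with rfl | ha0
  · simpa only [zero_mul] using powerBound_zero
  rcases Nat.eq_zero_or_pos b with rfl | hb0
  · simpa only [mul_zero] using powerBound_zero
  intro S _ _ _ ⟨m, hm, hnil⟩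
  let P := (pwHom a : S →ₙ* S).srange
  have hnilP : pw (Set.univ : Set P) m = {0} :=
    pw_univ_eq_zero_of_injective (MulMemClass.subtype P) Subtype.val_injective rfl hnil
  have hcardP : ((Set.univ : Set P) \ {0}).ncard =
      ((Set.range fun s : S => pw s a) \ {0}).ncard := by
    rw [← ncard_image_sdiff_zero Subtype.val_injective rfl, Set.image_univ, Subtype.range_coe]
    rfl
  have hcard_pw : ((Set.range fun x : P => pw x b) \ {0}).ncard =
      ((Set.range fun s : S => pw s (a * b)) \ {0}).ncard := by
    rw [← ncard_image_sdiff_zero Subtype.val_injective rfl, image_coe_range_pw_srange ha0 hb0]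
  calc a * b * ((Set.range fun s : S => pw s (a * b)) \ {0}).ncard
      = a * (b * ((Set.range fun x : P => pw x b) \ {0}).ncard) := by rw [mul_assoc, hcard_pw]
    _ ≤ a * ((Set.univ : Set P) \ {0}).ncard := Nat.mul_le_mul_left a (hb P ⟨m, hm, hnilP⟩)
    _ = a * ((Set.range fun s : S => pw s a) \ {0}).ncard := by rw [hcardP]
    _ ≤ _ := ha S ⟨m, hm, hnil⟩

lemma powerBound_of_eggertConjecture (h : EggertConjecture) (n : ℕ) : PowerBound n := by
  induction n using Nat.recOnMul with
  | zero => exact powerBound_zero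
  | one => exact powerBound_one
  | prime p hp => exact powerBound_prime h hp
  | mul a b ha hb => exact ha.mul hb

theorem stmt_11
    (eggert : ∀ (p : ℕ), p.Prime → ∀ (F : Type) [Field F] [CharP F p],
        (∀ a : F, ∃ b : F, b ^ p = a) →
        ∀ (R : Type) [NonUnitalCommRing R] [Module F R] [SMulCommClass F R R]
          [IsScalarTower F R R] [FiniteDimensional F R],
          (∃ m, 1 ≤ m ∧ pw (⊤ : Submodule F R) m = ⊥) →
          p * Module.finrank F (Submodule.span F (Set.range fun x : R => pw x p))
            ≤ Module.finrank F R) :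
    ∀ (S : Type) [SemigroupWithZero S], (∀ a b : S, a * b = b * a) → Finite S →
      (∃ m, 1 ≤ m ∧ pw (Set.univ : Set S) m = {0}) →
      ∀ n : ℕ, 1 ≤ n →
        n * ((Set.range fun s : S => pw s n) \ {0}).ncard
          ≤ ((Set.univ : Set S) \ {0}).ncard := by
  intro S _ hcomm _ hnil n _
  have : IsMulCommutative S := ⟨⟨hcomm⟩⟩
  exact powerBound_of_eggertConjecture eggert n S hnil
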